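/- arXiv:2409.18420 — 2 statements merged into one kernel-verified Lean document; each statement's English description precedes it below -/
import Mathlib

section
/- Let M, N ≥ 1 and d = 2^n. Let |C⟩ be a vector in P_C ⊗ P_T ⊗ (⊗_{i=1}^M I_i ⊗ O_i) ⊗ (⊗_{j=1}^N I′_j ⊗ O′_j) ⊗ F_C ⊗ F_T (all n-qubit factors ≅ ℂ^d; P_C, F_C ≅ ℂ²). Suppose that for all (M+N)-tuples of n-qubit unitaries (U_1,…,U_M,V_1,…,V_N) one has |C⟩ ∗ (|U_1⟩⟩ ⊗ ⋯ ⊗ |U_M⟩⟩ ⊗ |V_1⟩⟩ ⊗ ⋯ ⊗ |V_N⟩⟩) = Σ_{k=1}^M Σ_{l=1}^N ξ̃_{kl} |S_SWITCH⟩ ∗ (|U_k⟩⟩^{I_k O_k} ⊗ |V_l⟩⟩^{I′_l O′_l}), where each coefficient ξ̃_{kl}(U_1,…,U_M,V_1,…,V_N) ∈ ℂ does not depend on U_k or V_l and is the restriction to unitary arguments of a function multilinear in the matrices (U_i)_{i≠k} and (V_j)_{j≠l}. Then there exist fixed vectors |ξ̃_{kl}⟩ ∈ (⊗_{i≠k}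 I_i ⊗ O_i) ⊗ (⊗_{j≠l} I′_j ⊗ O′_j), independent of all the unitaries, such that |C⟩ = Σ_{k=1}^M Σ_{l=1}^N |S_SWITCH⟩^{P F I_k O_k I′_l O′_l} ⊗ |ξ̃_{kl}⟩ (up to the canonical reordering of tensor factors). -/
/-- Index of `ℂ^d` with `d = 2^n`. -/
abbrev Dix (n : ℕ) := Fin (2 ^ n)
/-- Index of a slot `I ⊗ O` (two copies of `ℂ^{2^n}`). -/
abbrev Sl (n : ℕ) := Dix n × Dix n
/-- Index of `P = P_C ⊗ P_T` (resp. `F = F_C ⊗ F_T`): `ℂ² ⊗ ℂ^{2^n}`. -/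
abbrev PFix (n : ℕ) := Fin 2 × Dix n

/-- Choi vector `|A⟩⟩ = Σ_i e_i ⊗ A e_i`: component at `(i, j)` is `A j i`. -/
noncomputable def choiV {n : ℕ} (A : Matrix (Dix n) (Dix n) ℂ) : Sl n → ℂ :=
  fun x => A x.2 x.1

/-- Component of the switch Choi vector `|S_SWITCH⟩` at `P`-index `p`, `(I,O)`-index `io`,
`(I′,O′)`-index `jo` and `F`-index `f`:
`|S⟩ = |0⟩|0⟩|1⟩⟩^{P_T I}|1⟩⟩^{O I′}|1⟩⟩^{O′ F_T} + |1⟩|1⟩|1⟩⟩^{P_T I′}|1⟩⟩^{O′ I}|1⟩⟩^{O F_T}`. -/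
noncomputable def swVec {n : ℕ} (p : PFix n) (io jo : Sl n) (f : PFix n) : ℂ :=
  (if p.1 = 0 ∧ f.1 = 0 ∧ p.2 = io.1 ∧ io.2 = jo.1 ∧ jo.2 = f.2 then 1 else 0) +
  (if p.1 = 1 ∧ f.1 = 1 ∧ p.2 = jo.1 ∧ jo.2 = io.1 ∧ io.2 = f.2 then 1 else 0)

/-- The contraction `|S_SWITCH⟩ ∗ (|U⟩⟩ ⊗ |V⟩⟩)`, a vector on `P ⊗ F`. -/
noncomputable def swLink {n : ℕ} (U V : Matrix (Dix n) (Dix n) ℂ) : PFix n × PFix n → ℂ :=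
  fun pf => ∑ io : Sl n, ∑ jo : Sl n, swVec pf.1 io jo pf.2 * choiV U io * choiV V jo

/-- The contraction `|C⟩ ∗ (|U_1⟩⟩ ⊗ ⋯ ⊗ |U_M⟩⟩ ⊗ |V_1⟩⟩ ⊗ ⋯ ⊗ |V_N⟩⟩)` of a vector on
`P ⊗ (⊗_{i=1}^M I_i ⊗ O_i) ⊗ (⊗_{j=1}^N I′_j ⊗ O′_j) ⊗ F`, a vector on `P ⊗ F`. -/
noncomputable def linkC2 {n M N : ℕ}
    (C : PFix n × (Fin M → Sl n) × (Fin N → Sl n) × PFix n → ℂ)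
    (U : Fin M → Matrix (Dix n) (Dix n) ℂ) (V : Fin N → Matrix (Dix n) (Dix n) ℂ) :
    PFix n × PFix n → ℂ :=
  fun pf => ∑ s : Fin M → Sl n, ∑ t : Fin N → Sl n,
    C (pf.1, s, t, pf.2) * (∏ i, choiV (U i) (s i)) * ∏ j, choiV (V j) (t j)

/-!
Fix the output index `(p, f)` and replace each `ξ̃_{kl}` by its multilinear extension `L_{kl}`.
Both sides of the hypothesis are then multilinear in the tuple `(U, V)` of matrices, and they
agree on unitaries. Unitary matrices span all matrices (as in any unital C⋆-algebra), so the
two sides agree everywhere. Evaluating at the matrix units whose Choi vectors are the standard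
basis vectors reads off the components of `C`, with `|ξ̃_{kl}⟩` the values of `L_{kl}` on matrix
units.
-/

open scoped Matrix.Norms.L2Operator in
theorem Matrix.span_unitaryGroup {ι : Type*} [Fintype ι] [DecidableEq ι] :
    Submodule.span ℂ (Matrix.unitaryGroup ι ℂ : Set (Matrix ι ι ℂ)) = ⊤ :=
  CStarAlgebra.span_unitary _

theorem MultilinearMap.eq_zero_of_forall_mem_of_span_eq_top {K X Y ι : Type*} [Field K]
    [Finite ι] [AddCommGroup X] [Module K X] [AddCommGroup Y] [Module K Y] {S : Set X}
    (hS : Submodule.span K S = ⊤) (f : MultilinearMap K (fun _ : ι => X) Y)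
    (h : ∀ W : ι → X, (∀ i, W i ∈ S) → f W = 0) : f = 0 := by
  obtain ⟨b, hbS, hspan, hli⟩ := exists_linearIndependent K S
  let B := Module.Basis.mk hli (by rw [Subtype.range_coe, hspan, hS])
  exact Module.Basis.ext_multilinear (fun _ => B) fun v => by
    simpa [B] using h _ fun i => hbS (v i).2

def Equiv.sumSubtypeNeSumPUnit {α β : Type*} [DecidableEq α] [DecidableEq β] (a : α) (b : β) :
    ({x // x ≠ a} ⊕ {y // y ≠ b}) ⊕ (PUnit ⊕ PUnit) ≃ α ⊕ β :=
  (Equiv.sumSumSumComm _ _ _ _).trans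
    (Equiv.sumCongr (Equiv.subtypeNeSumPUnit a) (Equiv.subtypeNeSumPUnit b))

section Link

variable {n : ℕ} {ι : Type*} [Fintype ι] [DecidableEq ι]

noncomputable def linkMultilinear (c : (ι → Sl n) → ℂ) :
    MultilinearMap ℂ (fun _ : ι => Matrix (Dix n) (Dix n) ℂ) ℂ :=
  ∑ x, c x • (MultilinearMap.mkPiAlgebra ℂ ι ℂ).compLinearMap
    fun i => Matrix.entryLinearMap ℂ ℂ (x i).2 (x i).1

theorem linkMultilinear_apply (c : (ι → Sl n) → ℂ) (W : ι → Matrix (Dix n) (Dix n) ℂ) :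
    linkMultilinear c W = ∑ x, c x * ∏ i, choiV (W i) (x i) := by
  simp [linkMultilinear, choiV]

noncomputable def choiUnit (y : Sl n) : Matrix (Dix n) (Dix n) ℂ := Matrix.single y.2 y.1 1

theorem choiV_choiUnit (y x : Sl n) : choiV (choiUnit y) x = if x = y then 1 else 0 := by
  simp [choiV, choiUnit, Matrix.single_apply, Prod.ext_iff, and_comm, eq_comm]

theorem linkMultilinear_choiUnit (c : (ι → Sl n) → ℂ) (y : ι → Sl n) :
    linkMultilinear c (fun i => choiUnit (y i)) = c y := by
  simp [linkMultilinear_apply, choiV_choiUnit, Finset.prod_ite_zero, ← funext_iff]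

theorem linkMultilinear_sumElim {ι₁ ι₂ : Type*} [Fintype ι₁] [DecidableEq ι₁] [Fintype ι₂]
    [DecidableEq ι₂] (c : (ι₁ ⊕ ι₂ → Sl n) → ℂ) (U : ι₁ → Matrix (Dix n) (Dix n) ℂ)
    (V : ι₂ → Matrix (Dix n) (Dix n) ℂ) :
    linkMultilinear c (Sum.elim U V) = ∑ s, ∑ t,
      c (Sum.elim s t) * (∏ i, choiV (U i) (s i)) * ∏ j, choiV (V j) (t j) := by
  rw [linkMultilinear_apply, ← (Equiv.sumArrowEquivProdArrow ι₁ ι₂ (Sl n)).symm.sum_comp,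
    Fintype.sum_prod_type]
  simp only [Fintype.prod_sum_type, Sum.elim_inl, Sum.elim_inr, mul_assoc]
  rfl

theorem linkC2_eq_linkMultilinear {M N : ℕ}
    (C : PFix n × (Fin M → Sl n) × (Fin N → Sl n) × PFix n → ℂ)
    (U : Fin M → Matrix (Dix n) (Dix n) ℂ) (V : Fin N → Matrix (Dix n) (Dix n) ℂ)
    (p f : PFix n) :
    linkC2 C U V (p, f) =
      linkMultilinear (fun x => C (p, x ∘ Sum.inl, x ∘ Sum.inr, f)) (Sum.elim U V) := by
  simp [linkMultilinear_sumElim, linkC2]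

noncomputable def switchCoeff (pf : PFix n × PFix n) : (Unit ⊕ Unit → Sl n) → ℂ :=
  fun x => swVec pf.1 (x (.inl ())) (x (.inr ())) pf.2

theorem swLink_eq_linkMultilinear (U V : Matrix (Dix n) (Dix n) ℂ) (pf : PFix n × PFix n) :
    swLink U V pf = linkMultilinear (switchCoeff pf) (Sum.elim (fun _ => U) (fun _ => V)) := by
  rw [linkMultilinear_sumElim, swLink, ← (Equiv.funUnique Unit (Sl n)).symm.sum_comp]
  simp only [← (Equiv.funUnique Unit (Sl n)).symm.sum_comp, Fintype.prod_unique, mul_assoc]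
  rfl

theorem swLink_choiUnit (y z : Sl n) (pf : PFix n × PFix n) :
    swLink (choiUnit y) (choiUnit z) pf = swVec pf.1 y z pf.2 := by
  rw [swLink_eq_linkMultilinear]
  refine (congrArg _ ?_).trans (linkMultilinear_choiUnit _ (Sum.elim (fun _ => y) fun _ => z))
  ext (_ | _) <;> rfl

end Link

section Switch
variable {n : ℕ} {α β : Type} [DecidableEq α] [DecidableEq β]

noncomputable def switchTerm {a : α} {b : β}
    (L : MultilinearMap ℂ (fun _ : {i // i ≠ a} ⊕ {j // j ≠ b} => Matrix (Dix n) (Dix n) ℂ) ℂ)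
    (pf : PFix n × PFix n) : MultilinearMap ℂ (fun _ : α ⊕ β => Matrix (Dix n) (Dix n) ℂ) ℂ :=
  ((LinearMap.mul' ℂ ℂ).compMultilinearMap
    (L.domCoprod (linkMultilinear (switchCoeff pf)))).domDomCongr (Equiv.sumSubtypeNeSumPUnit a b)

theorem switchTerm_sumElim {a : α} {b : β}
    (L : MultilinearMap ℂ (fun _ : {i // i ≠ a} ⊕ {j // j ≠ b} => Matrix (Dix n) (Dix n) ℂ) ℂ)
    (pf : PFix n × PFix n) (U : α → Matrix (Dix n) (Dix n) ℂ) (V : β → Matrix (Dix n) (Dix n) ℂ) :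
    switchTerm L pf (Sum.elim U V) =
      L (Sum.elim (fun i => U i.1) (fun j => V j.1)) * swLink (U a) (V b) pf := by
  simp only [switchTerm, MultilinearMap.domDomCongr_apply,
    LinearMap.compMultilinearMap_apply, MultilinearMap.domCoprod_apply, LinearMap.mul'_apply,
    swLink_eq_linkMultilinear]
  congr 2 <;> ext (_ | _) <;> rfl

end Switch

theorem stmt_4_general (n M N : ℕ)
    (C : PFix n × (Fin M → Sl n) × (Fin N → Sl n) × PFix n → ℂ)
    (ξ : Fin M → Fin N → (Fin M → Matrix (Dix n) (Dix n) ℂ) →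
      (Fin N → Matrix (Dix n) (Dix n) ℂ) → ℂ)
    (hlin : ∀ (k : Fin M) (l : Fin N),
      ∃ L : MultilinearMap ℂ
          (fun _ : {i : Fin M // i ≠ k} ⊕ {j : Fin N // j ≠ l} =>
            Matrix (Dix n) (Dix n) ℂ) ℂ,
        ∀ (U : Fin M → Matrix (Dix n) (Dix n) ℂ) (V : Fin N → Matrix (Dix n) (Dix n) ℂ),
          (∀ i, U i ∈ Matrix.unitaryGroup (Dix n) ℂ) →
          (∀ j, V j ∈ Matrix.unitaryGroup (Dix n) ℂ) →
          ξ k l U V = L (Sum.elim (fun i => U i.1) (fun j => V j.1)))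
    (heq : ∀ (U : Fin M → Matrix (Dix n) (Dix n) ℂ) (V : Fin N → Matrix (Dix n) (Dix n) ℂ),
      (∀ i, U i ∈ Matrix.unitaryGroup (Dix n) ℂ) →
      (∀ j, V j ∈ Matrix.unitaryGroup (Dix n) ℂ) →
      linkC2 C U V = fun pf => ∑ k, ∑ l, ξ k l U V * swLink (U k) (V l) pf) :
    ∃ ξv : (k : Fin M) → (l : Fin N) →
      (({i : Fin M // i ≠ k} → Sl n) × ({j : Fin N // j ≠ l} → Sl n)) → ℂ,
      ∀ (p : PFix n) (s : Fin M → Sl n) (t : Fin N → Sl n) (f : PFix n),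
        C (p, s, t, f) =
          ∑ k, ∑ l, swVec p (s k) (t l) f * ξv k l (fun i => s i.1, fun j => t j.1) := by
  choose L hL using hlin
  refine ⟨fun k l st => L k l (Sum.elim (fun i => choiUnit (st.1 i)) fun j => choiUnit (st.2 j)),
    fun p s t f => ?_⟩
  let Φ := linkMultilinear (fun x => C (p, x ∘ Sum.inl, x ∘ Sum.inr, f)) -
    ∑ k, ∑ l, switchTerm (L k l) (p, f)
  have hΦ : Φ = 0 := by
    refine Φ.eq_zero_of_forall_mem_of_span_eq_top Matrix.span_unitaryGroup fun W hW => ?_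
    obtain ⟨U, V, rfl⟩ : ∃ U V, W = Sum.elim U V := ⟨_, _, (Sum.elim_comp_inl_inr W).symm⟩
    have hU : ∀ i, U i ∈ Matrix.unitaryGroup (Dix n) ℂ := fun i => hW (.inl i)
    have hV : ∀ j, V j ∈ Matrix.unitaryGroup (Dix n) ℂ := fun j => hW (.inr j)
    simp only [Φ, sub_apply, sum_apply, switchTerm_sumElim,
      ← linkC2_eq_linkMultilinear, heq U V hU hV, ← hL _ _ U V hU hV, sub_self]
  have hunits : (fun x => choiUnit (Sum.elim s t x)) =
      Sum.elim (fun i => choiUnit (s i)) fun j => choiUnit (t j) := by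
    ext (_ | _) <;> rfl
  have hEval := congr($hΦ (fun x => choiUnit (Sum.elim s t x)))
  rw [sub_apply, linkMultilinear_choiUnit, hunits] at hEval
  simp only [sum_apply, switchTerm_sumElim, swLink_choiUnit] at hEval
  simpa only [zero_apply, sub_eq_zero, Sum.elim_comp_inl, Sum.elim_comp_inr,
    mul_comm] using hEval

/-- if `|C⟩ ∗ (⊗_i |U_i⟩⟩ ⊗ ⊗_j |V_j⟩⟩) = Σ_{k,l} ξ̃_{kl} |S⟩ ∗ (|U_k⟩⟩ ⊗ |V_l⟩⟩)`
for all `n`-qubit unitaries, with each `ξ̃_{kl}` independent of `U_k, V_l` and the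
restriction to unitaries of a function multilinear in `(U_i)_{i≠k}` and `(V_j)_{j≠l}`,
then `|C⟩ = Σ_{k,l} |S_SWITCH⟩^{P F I_k O_k I′_l O′_l} ⊗ |ξ̃_{kl}⟩` for fixed vectors
`|ξ̃_{kl}⟩` on the remaining tensor factors (stated componentwise, with the canonical
reordering of factors). -/
theorem stmt_4 (n M N : ℕ) (hM : 1 ≤ M) (hN : 1 ≤ N)
    (C : PFix n × (Fin M → Sl n) × (Fin N → Sl n) × PFix n → ℂ)
    (ξ : Fin M → Fin N → (Fin M → Matrix (Dix n) (Dix n) ℂ) →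
      (Fin N → Matrix (Dix n) (Dix n) ℂ) → ℂ)
    (hindep : ∀ (k : Fin M) (l : Fin N) U U' V V',
      (∀ i, i ≠ k → U i = U' i) → (∀ j, j ≠ l → V j = V' j) → ξ k l U V = ξ k l U' V')
    (hlin : ∀ (k : Fin M) (l : Fin N),
      ∃ L : MultilinearMap ℂ
          (fun _ : {i : Fin M // i ≠ k} ⊕ {j : Fin N // j ≠ l} =>
            Matrix (Dix n) (Dix n) ℂ) ℂ,
        ∀ (U : Fin M → Matrix (Dix n) (Dix n) ℂ) (V : Fin N → Matrix (Dix n) (Dix n) ℂ),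
          (∀ i, U i ∈ Matrix.unitaryGroup (Dix n) ℂ) →
          (∀ j, V j ∈ Matrix.unitaryGroup (Dix n) ℂ) →
          ξ k l U V = L (Sum.elim (fun i => U i.1) (fun j => V j.1)))
    (heq : ∀ (U : Fin M → Matrix (Dix n) (Dix n) ℂ) (V : Fin N → Matrix (Dix n) (Dix n) ℂ),
      (∀ i, U i ∈ Matrix.unitaryGroup (Dix n) ℂ) →
      (∀ j, V j ∈ Matrix.unitaryGroup (Dix n) ℂ) →
      linkC2 C U V = fun pf => ∑ k, ∑ l, ξ k l U V * swLink (U k) (V l) pf) :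
    ∃ ξv : (k : Fin M) → (l : Fin N) →
      (({i : Fin M // i ≠ k} → Sl n) × ({j : Fin N // j ≠ l} → Sl n)) → ℂ,
      ∀ (p : PFix n) (s : Fin M → Sl n) (t : Fin N → Sl n) (f : PFix n),
        C (p, s, t, f) =
          ∑ k, ∑ l, swVec p (s k) (t l) f * ξv k l (fun i => s i.1, fun j => t j.1) :=
  stmt_4_general n M N C ξ hlin heq
end

section
/- Let H_A, H_B, H_C be finite-dimensional complex Hilbert spaces and let |Q⟩ ∈ H_A ⊗ H_B, |R⟩ ∈ H_B ⊗ H_C. Then the matrix link product of the rank-one projectors satisfies |Q⟩⟨Q| ∗ |R⟩⟨R| = (|Q⟩∗|R⟩)(|Q⟩∗|R⟩)†, where on the left ∗ is the link product of operators and on the right ∗ is the link product of vectors. -/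
open scoped ComplexConjugate

variable {A B C : Type*} [Fintype A] [Fintype B] [Fintype C]

/-- The link product of vectors `|Q⟩ ∈ H_A ⊗ H_B` and `|R⟩ ∈ H_B ⊗ H_C`:
`|Q⟩∗|R⟩ := Σ_b ((1_A ⊗ ⟨b|)|Q⟩) ⊗ ((⟨b| ⊗ 1_C)|R⟩) ∈ H_A ⊗ H_C`. -/
noncomputable def linkVec (Q : A × B → ℂ) (R : B × C → ℂ) : A × C → ℂ :=
  fun x => ∑ b : B, Q (x.1, b) * R (b, x.2)

/-- The link product of matrices `Q ∈ L(H_A ⊗ H_B)` and `R ∈ L(H_B ⊗ H_C)`,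
`Q ∗ R := Tr_B[(Q^{T_B} ⊗ 1_C)(1_A ⊗ R)]`, written out entrywise. -/
noncomputable def linkMat (Q : Matrix (A × B) (A × B) ℂ) (R : Matrix (B × C) (B × C) ℂ) :
    Matrix (A × C) (A × C) ℂ :=
  fun x y => ∑ b : B, ∑ b' : B, Q (x.1, b) (y.1, b') * R (b, x.2) (b', y.2)

/-- `|Q⟩⟨Q| ∗ |R⟩⟨R| = (|Q⟩∗|R⟩)(|Q⟩∗|R⟩)†`. -/
theorem stmt_18 (Q : A × B → ℂ) (R : B × C → ℂ) :
    linkMat (Matrix.vecMulVec Q (star Q)) (Matrix.vecMulVec R (star R)) =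
      Matrix.vecMulVec (linkVec Q R) (star (linkVec Q R)) := by
  funext x y
  simp only [linkMat, linkVec, Matrix.vecMulVec_apply, Pi.star_apply, Finset.sum_mul,
    Finset.mul_sum, star_sum, star_mul']
  rw [Finset.sum_comm]
  exact Finset.sum_congr rfl fun b _ => Finset.sum_congr rfl fun b' _ => by ring
end
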